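/- Let U: ℂ^d → A'⊗B'⊗E be an isometry and suppose U|2⟩ = Σᵢ |xᵢ⟩_{A'}|yᵢ⟩_{B'}|i⟩_E and U|3⟩ = Σᵢ |ψᵢ⟩_{A'B'}|i⟩_E where {|i⟩_E} is an orthonormal basis and the |yᵢ⟩ are orthonormal. If the states |α₃⟩ = U(|2⟩+|3⟩)/√2 and |α₄⟩ = U(|2⟩−|3⟩)/√2 have orthogonal reduced density matrices on both A' and B' (that is, Tr[α₃^{A'}α₄^{A'}] = 0 and Tr[α₃^{B'}α₄^{B'}] = 0), then for each i there exists rᵢ ∈ {0,1} with |ψᵢ⟩ = (−1)^{rᵢ}|xᵢ⟩⊗|yᵢ⟩. -/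

import Mathlib

open Matrix Kronecker
open scoped ComplexOrder
noncomputable section

open scoped Classical in
/-- total matrix square root: the PSD square root when `M` is PSD, else `0`. -/
def matSqrt {n : Type*} [Fintype n] [DecidableEq n] (M : Matrix n n ℂ) : Matrix n n ℂ :=
  if h : M.PosSemidef then
    h.1.eigenvectorUnitary.1 * diagonal ((↑) ∘ (h.1.eigenvalues · |>.sqrt))
      * (star h.1.eigenvectorUnitary : Matrix n n ℂ)
  else 0

/-- trace (Schatten-1) norm `Tr √(MᴴM)`. -/
def traceNorm {n : Type*} [Fintype n] [DecidableEq n] (M : Matrix n n ℂ) : ℝ :=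
  (matSqrt (Mᴴ * M)).trace.re

/-- trace distance. -/
def traceDist {n : Type*} [Fintype n] [DecidableEq n] (ρ σ : Matrix n n ℂ) : ℝ :=
  traceNorm (ρ - σ) / 2

/-- fidelity `‖√ρ√σ‖₁`. -/
def fidelity {n : Type*} [Fintype n] [DecidableEq n] (ρ σ : Matrix n n ℂ) : ℝ :=
  traceNorm (matSqrt ρ * matSqrt σ)

/-- partial trace over the first tensor factor. -/
def trFst {a b : Type*} [Fintype a] (M : Matrix (a × b) (a × b) ℂ) : Matrix b b ℂ :=
  Matrix.of fun i j => ∑ k, M (k, i) (k, j)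

/-- partial trace over the second tensor factor. -/
def trSnd {a b : Type*} [Fintype b] (M : Matrix (a × b) (a × b) ℂ) : Matrix a a ℂ :=
  Matrix.of fun i j => ∑ k, M (i, k) (j, k)

/-- rank-one projector `|v⟩⟨v|`. -/
def outerP {n : Type*} (v : n → ℂ) : Matrix n n ℂ :=
  Matrix.of fun i j => v i * star (v j)

/-- tensor product of vectors. -/
def vkron {a b : Type*} (v : a → ℂ) (w : b → ℂ) : a × b → ℂ :=
  fun p => v p.1 * w p.2


/-- reduced density matrix on the `A'` factor of a vector on `(A' × B') × E`. -/
def redA {a b e : Type*} [Fintype b] [Fintype e] (v : (a × b) × e → ℂ) : Matrix a a ℂ :=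
  Matrix.of fun i j => ∑ k : b, ∑ m : e, v ((i, k), m) * star (v ((j, k), m))

/-- reduced density matrix on the `B'` factor of a vector on `(A' × B') × E`. -/
def redB {a b e : Type*} [Fintype a] [Fintype e] (v : (a × b) × e → ℂ) : Matrix b b ℂ :=
  Matrix.of fun i j => ∑ k : a, ∑ m : e, v ((k, i), m) * star (v ((k, j), m))


lemma sumConjZero {ι : Type*} [Fintype ι] {f : ι → ℂ} (h : ∑ i, f i * star (f i) = 0) :
    ∀ i, f i = 0 := by
  have h' : ((∑ j, Complex.normSq (f j) : ℝ) : ℂ) = 0 := by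
    rw [← h]; push_cast; exact Finset.sum_congr rfl fun j _ => (Complex.mul_conj (f j)).symm
  rw [Complex.ofReal_eq_zero] at h'
  intro i
  have := (Finset.sum_eq_zero_iff_of_nonneg (fun j _ => Complex.normSq_nonneg (f j))).1 h' i
    (Finset.mem_univ i)
  exact Complex.normSq_eq_zero.1 this

lemma matSelfZero {p q : Type*} [Fintype p] [Fintype q] {N : Matrix p q ℂ}
    (h : (N * Nᴴ).trace = 0) : N = 0 := by
  have h' : ∑ z : p × q, N z.1 z.2 * star (N z.1 z.2) = 0 := by
    rw [Fintype.sum_prod_type]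
    simpa [Matrix.trace, Matrix.mul_apply, Matrix.conjTranspose_apply, Matrix.diag] using h
  ext i j
  exact sumConjZero h' (i, j)

lemma ab_lemma {A B : Type*} [Fintype A] [Fintype B]
    (x : A → ℂ) (y : B → ℂ) (a b : A → B → ℂ)
    (hab : ∀ i k, a i k + b i k = 2 * (x i * y k))
    (H1 : ∀ l k : B, ∑ i : A, star (a i l) * b i k = 0)
    (H2 : ∀ l k : A, ∑ i : B, star (a l i) * b k i = 0) :
    (∀ i k, a i k = 0) ∨ (∀ i k, b i k = 0) := by
  -- key: orthogonality to x propagates to columns of a and b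
  have key : ∀ s : A → ℂ, (∑ i, star (x i) * s i = 0) →
      ∀ k, (∑ i, star (a i k) * s i = 0) ∧ (∑ i, star (b i k) * s i = 0) := by
    intro s hs k
    have hsum : ∀ k, (∑ i, star (a i k) * s i) + (∑ i, star (b i k) * s i) = 0 := by
      intro k
      have e1 : (∑ i, star (a i k) * s i) + (∑ i, star (b i k) * s i)
          = (2 * star (y k)) * ∑ i, star (x i) * s i := by
        rw [Finset.mul_sum, ← Finset.sum_add_distrib]
        refine Finset.sum_congr rfl fun i _ => ?_
        have : star (a i k) + star (b i k) = star ((2:ℂ) * (x i * y k)) := by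
          rw [← star_add, hab]
        calc star (a i k) * s i + star (b i k) * s i
            = (star (a i k) + star (b i k)) * s i := by ring
          _ = star ((2:ℂ) * (x i * y k)) * s i := by rw [this]
          _ = 2 * star (y k) * (star (x i) * s i) := by
              simp only [star_mul', star_ofNat]; ring
      rw [e1, hs, mul_zero]
    have hcross : ∑ k, (∑ i, star (a i k) * s i) * star (∑ i, star (b i k) * s i) = 0 := by
      have expand : ∀ k, (∑ i, star (a i k) * s i) * star (∑ i, star (b i k) * s i)
          = ∑ i, ∑ j, (s i * star (s j)) * (star (a i k) * b j k) := by
        intro k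
        rw [star_sum, Finset.sum_mul_sum]
        refine Finset.sum_congr rfl fun i _ => Finset.sum_congr rfl fun j _ => ?_
        simp only [star_mul', star_star]
        ring
      calc ∑ k, (∑ i, star (a i k) * s i) * star (∑ i, star (b i k) * s i)
          = ∑ k, ∑ i, ∑ j, (s i * star (s j)) * (star (a i k) * b j k) := by
            exact Finset.sum_congr rfl fun k _ => expand k
        _ = ∑ i, ∑ j, (s i * star (s j)) * ∑ k, star (a i k) * b j k := by
            rw [Finset.sum_comm]
            refine Finset.sum_congr rfl fun i _ => ?_
            rw [Finset.sum_comm]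
            exact Finset.sum_congr rfl fun j _ => by rw [Finset.mul_sum]
        _ = 0 := by
            refine Finset.sum_eq_zero fun i _ => Finset.sum_eq_zero fun j _ => ?_
            rw [H2 i j, mul_zero]
    -- h = -g hence sum of |g|^2 is zero
    have hgz : ∀ k, (∑ i, star (a i k) * s i) = 0 := by
      have : ∑ k, (∑ i, star (a i k) * s i) * star (∑ i, star (a i k) * s i) = 0 := by
        rw [← neg_eq_zero, ← hcross, ← Finset.sum_neg_distrib]
        refine Finset.sum_congr rfl fun k _ => ?_
        have hk := hsum k
        have : (∑ i, star (b i k) * s i) = -(∑ i, star (a i k) * s i) := by linear_combination hk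
        rw [this, star_neg]; ring
      exact sumConjZero this
    refine ⟨hgz k, ?_⟩
    have hk := hsum k
    rw [hgz k] at hk; simpa using hk
  set n : ℂ := ∑ i, star (x i) * x i with hn
  have hnstar : star n = n := by
    rw [hn, star_sum]
    exact Finset.sum_congr rfl fun i _ => by rw [star_mul', star_star, mul_comm]
  -- column structure of any c satisfying key-type property
  have colstr : ∀ (c : A → B → ℂ), (∀ s : A → ℂ, (∑ i, star (x i) * s i = 0) →
        ∀ k, ∑ i, star (c i k) * s i = 0) →
      ∀ k i, n * c i k = (∑ j, star (x j) * c j k) * x i := by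
    intro c hc k i
    set γ : ℂ := ∑ j, star (x j) * c j k with hγ
    set s : A → ℂ := fun i => n * c i k - γ * x i with hsdef
    have hs : ∑ i, star (x i) * s i = 0 := by
      rw [hsdef]
      simp only [mul_sub]
      rw [Finset.sum_sub_distrib]
      have e1 : ∑ i, star (x i) * (n * c i k) = n * γ := by
        rw [hγ, Finset.mul_sum]; exact Finset.sum_congr rfl fun i _ => by ring
      have e2 : ∑ i, star (x i) * (γ * x i) = γ * n := by
        rw [hn, Finset.mul_sum]; exact Finset.sum_congr rfl fun i _ => by ring
      rw [e1, e2]; ring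
    have hcs := hc s hs k
    have hss : ∑ i, s i * star (s i) = 0 := by
      have : ∑ i, s i * star (s i)
          = n * (∑ i, star (c i k) * s i) - star γ * (∑ i, star (x i) * s i) := by
        rw [Finset.mul_sum, Finset.mul_sum, ← Finset.sum_sub_distrib]
        refine Finset.sum_congr rfl fun i _ => ?_
        rw [hsdef]
        simp only [star_sub, star_mul', hnstar]
        ring
      rw [this, hcs, hs]; ring
    have := sumConjZero hss i
    rw [hsdef] at this
    linear_combination this
  have hacol := colstr a (fun s hs k => (key s hs k).1)
  have hbcol := colstr b (fun s hs k => (key s hs k).2)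
  by_cases hn0 : n = 0
  · -- x = 0, then a = -b and H1 forces both zero
    have hx : ∀ i, x i = 0 := by
      have : ∑ i, x i * star (x i) = 0 := by
        rw [← hn0, hn]; exact Finset.sum_congr rfl fun i _ => by ring
      exact sumConjZero this
    have hba : ∀ i k, b i k = -(a i k) := by
      intro i k; have := hab i k; rw [hx i] at this; linear_combination this
    have haz : ∀ i k, a i k = 0 := by
      intro i k
      have h0 : ∑ i, a i k * star (a i k) = 0 := by
        rw [← neg_eq_zero, ← H1 k k, ← Finset.sum_neg_distrib]
        refine Finset.sum_congr rfl fun i _ => by rw [hba i k]; ring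
      exact sumConjZero h0 i
    exact Or.inl haz
  · set γ : B → ℂ := fun k => ∑ j, star (x j) * a j k with hγ
    set δ : B → ℂ := fun k => ∑ j, star (x j) * b j k with hδ
    have hγδ : ∀ l k : B, star (γ l) * δ k = 0 := by
      intro l k
      have e : n * star n * ∑ i : A, star (a i l) * b i k = star (γ l) * δ k * n := by
        rw [Finset.mul_sum]
        have : ∀ i, n * star n * (star (a i l) * b i k)
            = star (n * a i l) * (n * b i k) := by
          intro i; simp only [star_mul', hnstar]; ring
        rw [Finset.sum_congr rfl fun i _ => this i]
        have : ∀ i, star (n * a i l) * (n * b i k)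
            = (star (γ l) * δ k) * (star (x i) * x i) := by
          intro i
          rw [hacol l i, hbcol k i]
          simp only [star_mul']
          ring
        rw [Finset.sum_congr rfl fun i _ => this i, ← Finset.mul_sum, ← hn]
      rw [H1 l k, mul_zero] at e
      rcases mul_eq_zero.1 e.symm with h | h
      · exact h
      · exact absurd h hn0
    by_cases hδ0 : ∀ k, δ k = 0
    · refine Or.inr fun i k => ?_
      have := hbcol k i
      rw [show (∑ j, star (x j) * b j k) = δ k from rfl, hδ0 k, zero_mul] at this
      exact (mul_eq_zero.1 this).resolve_left hn0
    · push_neg at hδ0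
      obtain ⟨k0, hk0⟩ := hδ0
      refine Or.inl fun i k => ?_
      have hγ0 : γ k = 0 := by
        have := hγδ k k0
        rcases mul_eq_zero.1 this with h | h
        · simpa using h
        · exact absurd h hk0
      have := hacol k i
      rw [show (∑ j, star (x j) * a j k) = γ k from rfl, hγ0, zero_mul] at this
      exact (mul_eq_zero.1 this).resolve_left hn0

set_option linter.unusedSectionVars false
section Extract
variable {A' B' E : Type*} [Fintype A'] [DecidableEq A'] [Fintype B'] [DecidableEq B']
  [Fintype E] [DecidableEq E] (α3 α4 : (A' × B') × E → ℂ)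

lemma extractA (hA : (redA α3 * redA α4).trace = 0) :
    ∀ (m : E) (l k : B'), ∑ i : A', star (α3 ((i, l), m)) * α4 ((i, k), m) = 0 := by
  set W3 : Matrix A' (B' × E) ℂ := Matrix.of fun i p => α3 ((i, p.1), p.2) with hW3
  set W4 : Matrix A' (B' × E) ℂ := Matrix.of fun i p => α4 ((i, p.1), p.2) with hW4
  have hred3 : redA α3 = W3 * W3ᴴ := by
    ext i j
    simp [redA, Matrix.mul_apply, Matrix.conjTranspose_apply, Fintype.sum_prod_type, hW3]
  have hred4 : redA α4 = W4 * W4ᴴ := by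
    ext i j
    simp [redA, Matrix.mul_apply, Matrix.conjTranspose_apply, Fintype.sum_prod_type, hW4]
  have htr : ((W3ᴴ * W4) * (W3ᴴ * W4)ᴴ).trace = 0 := by
    have e : ((W3ᴴ * W4) * (W3ᴴ * W4)ᴴ).trace = (redA α4 * redA α3).trace := by
      rw [hred3, hred4]
      simp only [Matrix.conjTranspose_mul, Matrix.conjTranspose_conjTranspose,
        Matrix.mul_assoc]
      rw [Matrix.trace_mul_comm]
      simp only [Matrix.mul_assoc]
    rw [e, Matrix.trace_mul_comm]
    exact hA
  have hz := matSelfZero htr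
  intro m l k
  have : (W3ᴴ * W4) (l, m) (k, m) = 0 := by rw [hz]; rfl
  simpa [Matrix.mul_apply, Matrix.conjTranspose_apply, hW3, hW4] using this

lemma extractB (hB : (redB α3 * redB α4).trace = 0) :
    ∀ (m : E) (l k : A'), ∑ i : B', star (α3 ((l, i), m)) * α4 ((k, i), m) = 0 := by
  set W3 : Matrix B' (A' × E) ℂ := Matrix.of fun i p => α3 ((p.1, i), p.2) with hW3
  set W4 : Matrix B' (A' × E) ℂ := Matrix.of fun i p => α4 ((p.1, i), p.2) with hW4
  have hred3 : redB α3 = W3 * W3ᴴ := by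
    ext i j
    simp [redB, Matrix.mul_apply, Matrix.conjTranspose_apply, Fintype.sum_prod_type, hW3]
  have hred4 : redB α4 = W4 * W4ᴴ := by
    ext i j
    simp [redB, Matrix.mul_apply, Matrix.conjTranspose_apply, Fintype.sum_prod_type, hW4]
  have htr : ((W3ᴴ * W4) * (W3ᴴ * W4)ᴴ).trace = 0 := by
    have e : ((W3ᴴ * W4) * (W3ᴴ * W4)ᴴ).trace = (redB α4 * redB α3).trace := by
      rw [hred3, hred4]
      simp only [Matrix.conjTranspose_mul, Matrix.conjTranspose_conjTranspose,
        Matrix.mul_assoc]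
      rw [Matrix.trace_mul_comm]
      simp only [Matrix.mul_assoc]
    rw [e, Matrix.trace_mul_comm]
    exact hB
  have hz := matSelfZero htr
  intro m l k
  have : (W3ᴴ * W4) (l, m) (k, m) = 0 := by rw [hz]; rfl
  simpa [Matrix.mul_apply, Matrix.conjTranspose_apply, hW3, hW4] using this

end Extract

theorem stmt17 {d : ℕ} (hd : 3 < d) {A' B' E : Type*}
    [Fintype A'] [DecidableEq A'] [Fintype B'] [DecidableEq B'] [Fintype E] [DecidableEq E]
    (U : Matrix ((A' × B') × E) (Fin d) ℂ) (hU : Uᴴ * U = 1)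
    (x : E → A' → ℂ) (y : E → B' → ℂ) (ψ : E → A' × B' → ℂ)
    (hy : ∀ i j : E, star (y i) ⬝ᵥ y j = if i = j then 1 else 0)
    (hU2 : U *ᵥ Pi.single (⟨2, by omega⟩ : Fin d) 1 = fun p => x p.2 p.1.1 * y p.2 p.1.2)
    (hU3 : U *ᵥ Pi.single (⟨3, hd⟩ : Fin d) 1 = fun p => ψ p.2 p.1)
    (α3 α4 : (A' × B') × E → ℂ)
    (hα3 : α3 = (1/(Real.sqrt 2 : ℂ)) •
      (U *ᵥ (Pi.single (⟨2, by omega⟩ : Fin d) 1 + Pi.single (⟨3, hd⟩ : Fin d) 1)))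
    (hα4 : α4 = (1/(Real.sqrt 2 : ℂ)) •
      (U *ᵥ (Pi.single (⟨2, by omega⟩ : Fin d) 1 - Pi.single (⟨3, hd⟩ : Fin d) 1)))
    (hA : (redA α3 * redA α4).trace = 0)
    (hB : (redB α3 * redB α4).trace = 0) :
    ∀ i : E, (ψ i = fun p => x i p.1 * y i p.2) ∨ (ψ i = fun p => -(x i p.1 * y i p.2)) := by
  set c : ℂ := 1/(Real.sqrt 2 : ℂ) with hc
  have hcne : c ≠ 0 := by
    rw [hc]
    simp [Real.sqrt_eq_zero', Complex.ofReal_eq_zero]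
  have hα3p : ∀ p, α3 p = c * (x p.2 p.1.1 * y p.2 p.1.2 + ψ p.2 p.1) := by
    intro p
    rw [hα3, Matrix.mulVec_add, hU2, hU3]
    simp [mul_add]
  have hα4p : ∀ p, α4 p = c * (x p.2 p.1.1 * y p.2 p.1.2 - ψ p.2 p.1) := by
    intro p
    rw [hα4, Matrix.mulVec_sub, hU2, hU3]
    simp [mul_sub]
  have hA' := extractA α3 α4 hA
  have hB' := extractB α3 α4 hB
  intro m
  set a : A' → B' → ℂ := fun i k => x m i * y m k + ψ m (i, k) with hadef
  set b : A' → B' → ℂ := fun i k => x m i * y m k - ψ m (i, k) with hbdef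
  have H1 : ∀ l k : B', ∑ i : A', star (a i l) * b i k = 0 := by
    intro l k
    have h0 := hA' m l k
    have e : ∀ i : A', star (α3 ((i, l), m)) * α4 ((i, k), m)
        = (star c * c) * (star (a i l) * b i k) := by
      intro i
      rw [hα3p ((i, l), m), hα4p ((i, k), m)]
      simp only [star_mul']
      ring
    rw [Finset.sum_congr rfl fun i _ => e i, ← Finset.mul_sum] at h0
    rcases mul_eq_zero.1 h0 with h | h
    · exact absurd h (by simp [hcne])
    · exact h
  have H2 : ∀ l k : A', ∑ i : B', star (a l i) * b k i = 0 := by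
    intro l k
    have h0 := hB' m l k
    have e : ∀ i : B', star (α3 ((l, i), m)) * α4 ((k, i), m)
        = (star c * c) * (star (a l i) * b k i) := by
      intro i
      rw [hα3p ((l, i), m), hα4p ((k, i), m)]
      simp only [star_mul']
      ring
    rw [Finset.sum_congr rfl fun i _ => e i, ← Finset.mul_sum] at h0
    rcases mul_eq_zero.1 h0 with h | h
    · exact absurd h (by simp [hcne])
    · exact h
  have hab : ∀ i k, a i k + b i k = 2 * (x m i * y m k) := fun i k => by
    rw [hadef, hbdef]; ring
  rcases ab_lemma (x m) (y m) a b hab H1 H2 with h | h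
  · refine Or.inr (funext fun p => ?_)
    obtain ⟨p1, p2⟩ := p
    have h0 : x m p1 * y m p2 + ψ m (p1, p2) = 0 := h p1 p2
    linear_combination h0
  · refine Or.inl (funext fun p => ?_)
    obtain ⟨p1, p2⟩ := p
    have h0 : x m p1 * y m p2 - ψ m (p1, p2) = 0 := h p1 p2
    linear_combination -h0
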